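/- Let λ > 0 and let h, g be analytic on 𝔻 with h(0) = 0, h'(0) = 1, g(0) = 0, g'(0) = 0, with Taylor coefficients a_n = h^{(n)}(0)/n! and b_n = g^{(n)}(0)/n!. If Σ_{n=2}^∞ (n − 1)(|a_n| + |b_n|) < λ (in particular the series converges), then the harmonic function f = h + conj∘g belongs to Ω_H^0(λ). -/

import Mathlib

open Complex

noncomputable section

/-- The open unit disk in the complex plane. -/
def unitDisk : Set ℂ := {z : ℂ | ‖z‖ < 1}

/-- The class `Ω_H^0(λ)` of harmonic mappings `f = h + conj ∘ g`. -/
def OmegaH0 (lam : ℝ) (h g : ℂ → ℂ) : Prop :=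
  AnalyticOnNhd ℂ h unitDisk ∧ AnalyticOnNhd ℂ g unitDisk ∧
    h 0 = 0 ∧ deriv h 0 = 1 ∧ g 0 = 0 ∧ deriv g 0 = 0 ∧
    ∀ z ∈ unitDisk,
      ‖h z - z * deriv h z‖ < lam - ‖g z - z * deriv g z‖

/-- The `n`-th Taylor coefficient of `f` at the origin. -/
def taylorCoef (f : ℂ → ℂ) (n : ℕ) : ℂ := iteratedDeriv n f 0 / n.factorial

lemma unitDisk_eq : unitDisk = Metric.ball (0:ℂ) 1 := by
  ext z; simp [unitDisk, Metric.mem_ball, Complex.dist_eq]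

lemma hasSum_taylor (f : ℂ → ℂ) (hf : AnalyticOnNhd ℂ f unitDisk) {z : ℂ} (hz : z ∈ unitDisk) :
    HasSum (fun n : ℕ ↦ taylorCoef f n * z ^ n) (f z) := by
  have := Complex.hasSum_taylorSeries_on_ball (c := 0) (r := 1)
    (unitDisk_eq ▸ hf.differentiableOn) (unitDisk_eq ▸ hz)
  convert this using 2 with n
  case e'_3 => rfl
  have : (n.factorial : ℂ) ≠ 0 := Nat.cast_ne_zero.mpr n.factorial_ne_zero
  simp [taylorCoef, smul_eq_mul]
  field_simp

lemma key (f : ℂ → ℂ) (hf : AnalyticOnNhd ℂ f unitDisk) (hf0 : f 0 = 0)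
    {z : ℂ} (hz : z ∈ unitDisk) :
    HasSum (fun n : ℕ ↦ -(((n : ℂ) + 1) * taylorCoef f (n + 2) * z ^ (n + 2)))
      (f z - z * deriv f z) := by
  -- Taylor series of f
  have Hf := hasSum_taylor f hf hz
  -- Taylor series of deriv f
  have Hd := hasSum_taylor (deriv f) hf.deriv hz
  have hcoef : ∀ n : ℕ, taylorCoef (deriv f) n = ((n : ℂ) + 1) * taylorCoef f (n + 1) := by
    intro n
    have hne : (n.factorial : ℂ) ≠ 0 := Nat.cast_ne_zero.mpr n.factorial_ne_zero
    have hne2 : ((n : ℂ) + 1) ≠ 0 := Nat.cast_add_one_ne_zero n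
    simp only [taylorCoef, ← iteratedDeriv_succ', Nat.factorial_succ]
    push_cast
    field_simp
  simp only [hcoef] at Hd
  -- multiply by z
  have Hd' : HasSum (fun n : ℕ ↦ ((n : ℂ) + 1) * taylorCoef f (n + 1) * z ^ (n + 1))
      (z * deriv f z) := by
    have := Hd.mul_left z
    convert this using 2 with n
    case e'_3 => rfl
    ring
  -- reindex: v n = n * taylorCoef f n * z^n
  have Hv : HasSum (fun n : ℕ ↦ (n : ℂ) * taylorCoef f n * z ^ n) (z * deriv f z) := by
    have h0 : ((0 : ℕ) : ℂ) * taylorCoef f 0 * z ^ 0 = 0 := by simp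
    rw [← (hasSum_nat_add_iff' 1)]
    simpa [h0] using Hd'
  have Hsub := Hf.sub Hv
  have hterm : ∀ n : ℕ, taylorCoef f n * z ^ n - (n : ℂ) * taylorCoef f n * z ^ n
      = (1 - (n : ℂ)) * taylorCoef f n * z ^ n := by intro n; ring
  simp only [hterm] at Hsub
  have := (hasSum_nat_add_iff' (f := fun n : ℕ ↦ (1 - (n : ℂ)) * taylorCoef f n * z ^ n) 2).mpr Hsub
  have h00 : taylorCoef f 0 = 0 := by simp [taylorCoef, hf0]
  simp only [Finset.sum_range_succ, Finset.sum_range_zero, h00] at this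
  simp only [Nat.cast_zero, Nat.cast_one, zero_mul, mul_zero, zero_add, sub_self,
    zero_mul, add_zero, sub_zero] at this
  convert this using 2 with n
  case e'_3 => rfl
  push_cast
  ring

lemma bound (f : ℂ → ℂ) (hf : AnalyticOnNhd ℂ f unitDisk) (hf0 : f 0 = 0)
    {z : ℂ} (hz : z ∈ unitDisk)
    (hs : Summable (fun n : ℕ ↦ ((n : ℝ) + 1) * ‖taylorCoef f (n + 2)‖)) :
    ‖f z - z * deriv f z‖
      ≤ ∑' n : ℕ, ((n : ℝ) + 1) * ‖taylorCoef f (n + 2)‖ := by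
  have hk := key f hf hf0 hz
  have hnorm : ∀ n : ℕ, ‖-(((n : ℂ) + 1) * taylorCoef f (n + 2) * z ^ (n + 2))‖
      ≤ ((n : ℝ) + 1) * ‖taylorCoef f (n + 2)‖ := by
    intro n
    rw [norm_neg, norm_mul, norm_mul, norm_pow]
    have h1 : ‖((n : ℂ) + 1)‖ = (n : ℝ) + 1 := by
      rw [show ((n : ℂ) + 1) = ((n + 1 : ℕ) : ℂ) by push_cast; ring, Complex.norm_natCast]
      push_cast; ring
    rw [h1]
    have hz1 : ‖z‖ ^ (n + 2) ≤ 1 := by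
      apply pow_le_one₀ (norm_nonneg z) (le_of_lt ?_)
      simpa [unitDisk] using hz
    calc ((n : ℝ) + 1) * ‖taylorCoef f (n + 2)‖ * ‖z‖ ^ (n + 2)
        ≤ ((n : ℝ) + 1) * ‖taylorCoef f (n + 2)‖ * 1 := by
          apply mul_le_mul_of_nonneg_left hz1
          positivity
      _ = _ := by ring
  have hsn : Summable (fun n : ℕ ↦ ‖-(((n : ℂ) + 1) * taylorCoef f (n + 2) * z ^ (n + 2))‖) :=
    Summable.of_nonneg_of_le (fun n ↦ norm_nonneg _) hnorm hs
  calc ‖f z - z * deriv f z‖ = ‖∑' n : ℕ, -(((n : ℂ) + 1) * taylorCoef f (n + 2) * z ^ (n + 2))‖ := by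
        rw [hk.tsum_eq]
    _ ≤ ∑' n : ℕ, ‖-(((n : ℂ) + 1) * taylorCoef f (n + 2) * z ^ (n + 2))‖ :=
        norm_tsum_le_tsum_norm hsn
    _ ≤ _ := Summable.tsum_le_tsum hnorm hsn hs

theorem stmt9 (lam : ℝ) (hlam : 0 < lam) (h g : ℂ → ℂ)
    (hh : AnalyticOnNhd ℂ h unitDisk) (hg : AnalyticOnNhd ℂ g unitDisk)
    (h0 : h 0 = 0) (h1 : deriv h 0 = 1) (g0 : g 0 = 0) (g1 : deriv g 0 = 0)
    (hsum : Summable (fun n : ℕ => ((n : ℝ) + 1) *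
      (‖taylorCoef h (n + 2)‖ + ‖taylorCoef g (n + 2)‖)))
    (hlt : (∑' n : ℕ, ((n : ℝ) + 1) *
      (‖taylorCoef h (n + 2)‖ + ‖taylorCoef g (n + 2)‖)) < lam) :
    OmegaH0 lam h g := by
  have hA : Summable (fun n : ℕ ↦ ((n : ℝ) + 1) * ‖taylorCoef h (n + 2)‖) := by
    apply Summable.of_nonneg_of_le (fun n ↦ by positivity) _ hsum
    intro n
    have : ‖taylorCoef h (n + 2)‖ ≤
        ‖taylorCoef h (n + 2)‖ + ‖taylorCoef g (n + 2)‖ := by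
      nlinarith [norm_nonneg (taylorCoef g (n + 2))]
    nlinarith [Nat.cast_nonneg (α := ℝ) n]
  have hB : Summable (fun n : ℕ ↦ ((n : ℝ) + 1) * ‖taylorCoef g (n + 2)‖) := by
    apply Summable.of_nonneg_of_le (fun n ↦ by positivity) _ hsum
    intro n
    nlinarith [norm_nonneg (taylorCoef h (n + 2)),
      Nat.cast_nonneg (α := ℝ) n]
  refine ⟨hh, hg, h0, h1, g0, g1, fun z hz ↦ ?_⟩
  rw [lt_sub_iff_add_lt]
  have e1 := bound h hh h0 hz hA
  have e2 := bound g hg g0 hz hB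
  have esum : (∑' n : ℕ, ((n : ℝ) + 1) * ‖taylorCoef h (n + 2)‖)
      + (∑' n : ℕ, ((n : ℝ) + 1) * ‖taylorCoef g (n + 2)‖)
      = ∑' n : ℕ, ((n : ℝ) + 1) *
        (‖taylorCoef h (n + 2)‖ + ‖taylorCoef g (n + 2)‖) := by
    rw [← Summable.tsum_add hA hB]
    congr 1 with n
    ring
  linarith
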